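/- arXiv:1307.8414 — 5 statements merged into one kernel-verified Lean document; each statement's English description precedes it below -/
import Mathlib

section
/- For any T ∈ U(c,d) with c ≥ d, there exist unitary matrices U_1, V_1 ∈ U(c), unitary matrices U_2, V_2 ∈ U(d), and a real diagonal d×d matrix Γ = diag(γ_1,...,γ_d) with γ_1 ≥ γ_2 ≥ ... ≥ γ_d ≥ 0, such that T = diag(U_1, U_2) · M(Γ) · diag(V_1, V_2), where M(Γ) is the (c+d)×(c+d) matrix with blocks cosh(Γ) (top-left d×d corner), identity 1_{c-d} (middle), sinh(Γ) in the off-diagonal corners coupling the first d and last d coordinates, and cosh(Γ) in the bottom-right d×d block. -/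
/-!
Write `T = [[A, B], [C, D]]`. The relation `Tᴴ G T = G` gives `DᴴD = 1 + BᴴB`, so a unitary `W`
diagonalising `BᴴB` with decreasing eigenvalues `sinh² γⱼ` makes the columns of `BW` and `DW`
orthogonal, of lengths `sinh γⱼ` and `cosh γⱼ`; hence `BW = U₁ (sinh Γ; 0)` and `DW = U₂ cosh Γ`
for unitaries `U₁, U₂`. Now `T diag(1, W)` and `diag(U₁, U₂) M(Γ)` are elements of the group
`U(c,d)` with the same last `d` columns, so they differ by a right factor in `U(c,d)` fixing the
last `d` basis vectors, and such an element is `diag(V₁, 1)` with `V₁` unitary.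
-/

open Matrix MeasureTheory Filter
open scoped ComplexOrder
noncomputable section

/-- The singular values of a complex square matrix indexed by `Fin n`,
listed in decreasing order (`sv T 0` is the largest). -/
def sv {n : ℕ} (T : Matrix (Fin n) (Fin n) ℂ) : Fin n → ℝ := fun i =>
  let ev := (Matrix.isHermitian_conjTranspose_mul_self T).eigenvalues
  Real.sqrt (ev (Tuple.sort ev i.rev))

/-- The hermitian form matrix `G_{c,d} = diag(1_c, -1_d)`. -/
def Gcd (c d : ℕ) : Matrix (Fin c ⊕ Fin d) (Fin c ⊕ Fin d) ℂ :=
  Matrix.fromBlocks 1 0 0 (-1)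

/-- The pseudo-unitary group `U(c,d) = {T : Tᴴ G_{c,d} T = G_{c,d}}`. -/
def pseudoU (c d : ℕ) : Set (Matrix (Fin c ⊕ Fin d) (Fin c ⊕ Fin d) ℂ) :=
  { T | Tᴴ * Gcd c d * T = Gcd c d }

/-- Singular values, in decreasing order, of a matrix indexed by `Fin c ⊕ Fin d`. -/
def svS {c d : ℕ} (T : Matrix (Fin c ⊕ Fin d) (Fin c ⊕ Fin d) ℂ) : Fin (c + d) → ℝ :=
  sv (T.submatrix finSumFinEquiv.symm finSumFinEquiv.symm)

/-- `N_r(T) = Σ_{i=1}^r ln((σ_i(T) + σ_i(T)⁻¹)/2)` for decreasingly ordered singular values. -/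
def NS {c d : ℕ} (r : ℕ) (T : Matrix (Fin c ⊕ Fin d) (Fin c ⊕ Fin d) ℂ) : ℝ :=
  ∑ i : Fin (c + d), if (i : ℕ) < r then Real.log ((svS T i + (svS T i)⁻¹) / 2) else 0

/-- The unitary `U_θ^{(c,d)} = diag(e^{2πiθ} 1_c, 1_d)`. -/
def Umat (c d : ℕ) (θ : ℝ) : Matrix (Fin c ⊕ Fin d) (Fin c ⊕ Fin d) ℂ :=
  Matrix.fromBlocks (Complex.exp (((2 * Real.pi * θ : ℝ) : ℂ) * Complex.I) • 1) 0 0 1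

/-- The symplectic form matrix `J = [[0, 1_d], [-1_d, 0]]`. -/
def Jmat (d : ℕ) : Matrix (Fin d ⊕ Fin d) (Fin d ⊕ Fin d) ℂ :=
  Matrix.fromBlocks 0 1 (-1) 0

/-- The hermitian-symplectic group `HSp(2d) = {T : Tᴴ J T = J}`. -/
def HSp (d : ℕ) : Set (Matrix (Fin d ⊕ Fin d) (Fin d ⊕ Fin d) ℂ) :=
  { T | Tᴴ * Jmat d * T = Jmat d }

/-- The Cayley transform `C = (1/√2)[[1, i·1],[1, -i·1]]`. -/
def Cayley (d : ℕ) : Matrix (Fin d ⊕ Fin d) (Fin d ⊕ Fin d) ℂ :=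
  ((Real.sqrt 2 : ℂ))⁻¹ • Matrix.fromBlocks 1 (Complex.I • 1) 1 ((-Complex.I) • 1)

/-- The rotation matrix `R_θ = [[cos(πθ)1, -sin(πθ)1],[sin(πθ)1, cos(πθ)1]]`. -/
def Rrot (d : ℕ) (θ : ℝ) : Matrix (Fin d ⊕ Fin d) (Fin d ⊕ Fin d) ℂ :=
  Matrix.fromBlocks ((Real.cos (Real.pi * θ) : ℂ) • 1) (-((Real.sin (Real.pi * θ) : ℂ) • 1))
    ((Real.sin (Real.pi * θ) : ℂ) • 1) ((Real.cos (Real.pi * θ) : ℂ) • 1)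

/-- The spectral radius of the `d`-th exterior power: the product of the `d` largest
absolute values of eigenvalues (roots of the characteristic polynomial, with
algebraic multiplicity). -/
def rhoLam {m : Type*} [Fintype m] [DecidableEq m] (d : ℕ) (M : Matrix m m ℂ) : ℝ :=
  (((M.charpoly.roots.map (fun z : ℂ => ‖z‖)).sort (· ≥ ·)).take d).prod

/-- `‖Λ^r T‖`: the product of the `r` largest singular values of `T`. -/
def normLam {c d : ℕ} (r : ℕ) (T : Matrix (Fin c ⊕ Fin d) (Fin c ⊕ Fin d) ℂ) : ℝ :=
  ∏ i : Fin (c + d), if (i : ℕ) < r then svS T i else 1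

/-- The Möbius action `T · M = (AM + B)(CM + D)⁻¹` of a block matrix on `c × d` matrices. -/
def mob {c d : ℕ} (T : Matrix (Fin c ⊕ Fin d) (Fin c ⊕ Fin d) ℂ)
    (M : Matrix (Fin c) (Fin d) ℂ) : Matrix (Fin c) (Fin d) ℂ :=
  (T.toBlocks₁₁ * M + T.toBlocks₁₂) * (T.toBlocks₂₁ * M + T.toBlocks₂₂)⁻¹

/-- The cocycle `B_n(x) = B(f^{n-1}x) ⋯ B(fx) B(x)`. -/
def cocycle {X : Type*} {m : Type*} [Fintype m] [DecidableEq m]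
    (f : X → X) (B : X → Matrix m m ℂ) (x : X) : ℕ → Matrix m m ℂ
  | 0 => 1
  | n + 1 => B (f^[n] x) * cocycle f B x n

section PseudoUnitary

variable {c d : ℕ}

lemma Gcd_mul_self : Gcd c d * Gcd c d = 1 := by
  simp [Gcd, fromBlocks_multiply]

lemma fromBlocks_conjTranspose_mul_Gcd_mul (A : Matrix (Fin c) (Fin c) ℂ)
    (B : Matrix (Fin c) (Fin d) ℂ) (C : Matrix (Fin d) (Fin c) ℂ) (D : Matrix (Fin d) (Fin d) ℂ) :
    (fromBlocks A B C D)ᴴ * Gcd c d * fromBlocks A B C D =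
      fromBlocks (Aᴴ * A - Cᴴ * C) (Aᴴ * B - Cᴴ * D) (Bᴴ * A - Dᴴ * C) (Bᴴ * B - Dᴴ * D) := by
  simp [Gcd, fromBlocks_conjTranspose, fromBlocks_multiply, sub_eq_add_neg]

lemma fromBlocks_mem_pseudoU_iff {A : Matrix (Fin c) (Fin c) ℂ}
    {B : Matrix (Fin c) (Fin d) ℂ} {C : Matrix (Fin d) (Fin c) ℂ} {D : Matrix (Fin d) (Fin d) ℂ} :
    fromBlocks A B C D ∈ pseudoU c d ↔
      Aᴴ * A - Cᴴ * C = 1 ∧ Aᴴ * B - Cᴴ * D = 0 ∧ Bᴴ * B - Dᴴ * D = -1 := by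
  rw [pseudoU, Set.mem_ofPred_eq, fromBlocks_conjTranspose_mul_Gcd_mul, Gcd, fromBlocks_inj]
  constructor
  · rintro ⟨h₁, h₂, -, h₄⟩
    exact ⟨h₁, h₂, h₄⟩
  · rintro ⟨h₁, h₂, h₄⟩
    refine ⟨h₁, h₂, ?_, h₄⟩
    simpa using congrArg conjTranspose h₂

lemma fromBlocks_mem_pseudoU_of_mem_unitaryGroup {U₁ : Matrix (Fin c) (Fin c) ℂ}
    {U₂ : Matrix (Fin d) (Fin d) ℂ} (h₁ : U₁ ∈ unitaryGroup (Fin c) ℂ)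
    (h₂ : U₂ ∈ unitaryGroup (Fin d) ℂ) : fromBlocks U₁ 0 0 U₂ ∈ pseudoU c d := by
  rw [mem_unitaryGroup_iff', star_eq_conjTranspose] at h₁ h₂
  simp [fromBlocks_mem_pseudoU_iff, h₁, h₂]

lemma mul_mem_pseudoU {S T : Matrix (Fin c ⊕ Fin d) (Fin c ⊕ Fin d) ℂ} (hS : S ∈ pseudoU c d)
    (hT : T ∈ pseudoU c d) : S * T ∈ pseudoU c d := by
  change (S * T)ᴴ * Gcd c d * (S * T) = Gcd c d
  rw [conjTranspose_mul, show Tᴴ * Sᴴ * Gcd c d * (S * T) = Tᴴ * (Sᴴ * Gcd c d * S) * T by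
    simp only [Matrix.mul_assoc], hS, hT]

lemma Gcd_mul_conjTranspose_mul_Gcd_mul {T : Matrix (Fin c ⊕ Fin d) (Fin c ⊕ Fin d) ℂ}
    (hT : T ∈ pseudoU c d) : Gcd c d * Tᴴ * Gcd c d * T = 1 := by
  rw [Matrix.mul_assoc, Matrix.mul_assoc, ← Matrix.mul_assoc Tᴴ, hT, Gcd_mul_self]

lemma mul_Gcd_mul_conjTranspose_mul_Gcd {T : Matrix (Fin c ⊕ Fin d) (Fin c ⊕ Fin d) ℂ}
    (hT : T ∈ pseudoU c d) : T * (Gcd c d * Tᴴ * Gcd c d) = 1 :=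
  mul_eq_one_comm.mp (Gcd_mul_conjTranspose_mul_Gcd_mul hT)

lemma Gcd_mul_conjTranspose_mul_Gcd_mem_pseudoU {T : Matrix (Fin c ⊕ Fin d) (Fin c ⊕ Fin d) ℂ}
    (hT : T ∈ pseudoU c d) : Gcd c d * Tᴴ * Gcd c d ∈ pseudoU c d := by
  have hG : (Gcd c d)ᴴ = Gcd c d := by simp [Gcd, fromBlocks_conjTranspose]
  change (Gcd c d * Tᴴ * Gcd c d)ᴴ * Gcd c d * (Gcd c d * Tᴴ * Gcd c d) = Gcd c d
  have := mul_Gcd_mul_conjTranspose_mul_Gcd hT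
  simp only [conjTranspose_mul, conjTranspose_conjTranspose, hG, Matrix.mul_assoc] at this ⊢
  rw [← Matrix.mul_assoc (Gcd c d) (Gcd c d), Gcd_mul_self, Matrix.one_mul, this, Matrix.mul_one]

lemma exists_eq_fromBlocks_one_of_mul_eq {N : Matrix (Fin c ⊕ Fin d) (Fin c ⊕ Fin d) ℂ}
    (hN : N ∈ pseudoU c d)
    (h : N * fromBlocks 0 0 0 (1 : Matrix (Fin d) (Fin d) ℂ) = fromBlocks 0 0 0 1) :
    ∃ V ∈ unitaryGroup (Fin c) ℂ, N = fromBlocks V 0 0 1 := by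
  rw [← fromBlocks_toBlocks N] at hN h ⊢
  simp only [fromBlocks_multiply, Matrix.mul_zero, Matrix.mul_one, add_zero, zero_add,
    fromBlocks_inj] at h
  obtain ⟨-, hB, -, hD⟩ := h
  rw [hB, hD, fromBlocks_mem_pseudoU_iff] at hN
  obtain ⟨hA, hC, -⟩ := hN
  simp only [Matrix.mul_zero, Matrix.mul_one, zero_sub, neg_eq_zero, conjTranspose_eq_zero] at hC
  rw [hC, conjTranspose_zero, Matrix.zero_mul, sub_zero] at hA
  exact ⟨_, mem_unitaryGroup_iff'.mpr hA, by rw [hB, hC, hD]⟩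

lemma exists_eq_mul_fromBlocks_one_of_mul_eq {S T : Matrix (Fin c ⊕ Fin d) (Fin c ⊕ Fin d) ℂ}
    (hS : S ∈ pseudoU c d) (hT : T ∈ pseudoU c d)
    (h : T * fromBlocks 0 0 0 (1 : Matrix (Fin d) (Fin d) ℂ) = S * fromBlocks 0 0 0 1) :
    ∃ V ∈ unitaryGroup (Fin c) ℂ, T = S * fromBlocks V 0 0 1 := by
  obtain ⟨V, hV, hN⟩ := exists_eq_fromBlocks_one_of_mul_eq
    (mul_mem_pseudoU (Gcd_mul_conjTranspose_mul_Gcd_mem_pseudoU hS) hT)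
    (by rw [Matrix.mul_assoc, h, ← Matrix.mul_assoc, Gcd_mul_conjTranspose_mul_Gcd_mul hS,
      Matrix.one_mul])
  refine ⟨V, hV, ?_⟩
  rw [← hN, ← Matrix.mul_assoc, mul_Gcd_mul_conjTranspose_mul_Gcd hS, Matrix.one_mul]

end PseudoUnitary

theorem Matrix.IsHermitian.exists_unitary_conjTranspose_mul_mul_eq_diagonal_antitone
    {𝕜 : Type*} [RCLike 𝕜] {n : ℕ} {H : Matrix (Fin n) (Fin n) 𝕜} (hH : H.IsHermitian) :
    ∃ W ∈ unitaryGroup (Fin n) 𝕜, ∃ μ : Fin n → ℝ, Antitone μ ∧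
      Wᴴ * H * W = diagonal fun i => (μ i : 𝕜) := by
  -- unlike `IsHermitian.eigenvalues`, the eigenvalues of the symmetric operator come sorted
  have hS := isSymmetric_toEuclideanLin_iff.mpr hH
  have hn : Module.finrank 𝕜 (EuclideanSpace 𝕜 (Fin n)) = n := finrank_euclideanSpace_fin
  set b := hS.eigenvectorBasis hn
  set W := (EuclideanSpace.basisFun (Fin n) 𝕜).toBasis.toMatrix b.toBasis
  have hW : W ∈ unitaryGroup (Fin n) 𝕜 :=
    (EuclideanSpace.basisFun (Fin n) 𝕜).toMatrix_orthonormalBasis_mem_unitary b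
  have hHW : H * W = W * diagonal fun i => (hS.eigenvalues hn i : 𝕜) := by
    ext k j
    have hj : H *ᵥ (b j).ofLp = (hS.eigenvalues hn j : 𝕜) • (b j).ofLp := by
      simpa only [toLpLin_apply, RCLike.real_smul_eq_coe_smul (K := 𝕜), WithLp.ofLp_smul] using
        congrArg WithLp.ofLp (hS.apply_eigenvectorBasis hn j)
    rw [mul_diagonal]
    simpa [W, Module.Basis.toMatrix_apply, mulVec, dotProduct, mul_apply, mul_comm] using
      congrFun hj k
  refine ⟨W, hW, hS.eigenvalues hn, hS.eigenvalues_antitone hn, ?_⟩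
  rw [Matrix.mul_assoc, hHW, ← Matrix.mul_assoc, ← star_eq_conjTranspose,
    (mem_unitaryGroup_iff').mp hW, Matrix.one_mul]

def rectDiag (m : ℕ) {n : ℕ} (s : Fin n → ℂ) : Matrix (Fin m) (Fin n) ℂ :=
  of fun i j => if (i : ℕ) = j then s j else 0

section RectDiag

variable {m n : ℕ}

lemma mul_rectDiag_apply (h : n ≤ m) {l : Type*} (Y : Matrix l (Fin m) ℂ) (s : Fin n → ℂ)
    (k : l) (j : Fin n) : (Y * rectDiag m s) k j = Y k (Fin.castLE h j) * s j := by
  rw [mul_apply, Finset.sum_eq_single (Fin.castLE h j)]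
  · simp [rectDiag]
  · intro i _ hi
    have hij : (i : ℕ) ≠ j := fun e => hi (Fin.ext e)
    simp [rectDiag, hij]
  · simp

lemma conjTranspose_rectDiag_mul_rectDiag (h : n ≤ m) (s : Fin n → ℂ) :
    (rectDiag m s)ᴴ * rectDiag m s = diagonal fun j => star (s j) * s j := by
  ext i j
  rw [mul_rectDiag_apply h, diagonal_apply]
  by_cases hij : i = j
  · simp [rectDiag, hij]
  · simp [rectDiag, Fin.val_ne_of_ne (Ne.symm hij), hij]

lemma rectDiag_mul_conjTranspose_rectDiag (s : Fin n → ℂ) :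
    rectDiag m s * (rectDiag m s)ᴴ =
      diagonal fun i : Fin m => if hi : (i : ℕ) < n then s ⟨i, hi⟩ * star (s ⟨i, hi⟩) else 0 := by
  ext i i'
  rw [mul_apply, diagonal_apply]
  by_cases hi : (i : ℕ) < n
  · rw [Finset.sum_eq_single ⟨i, hi⟩]
    · by_cases hii : i = i'
      · subst hii
        simp [rectDiag, hi]
      · simp [rectDiag, hii, Fin.val_ne_of_ne (Ne.symm hii)]
    · intro k _ hk
      have : (i : ℕ) ≠ k := fun e => hk (Fin.ext e.symm)
      simp [rectDiag, this]
    · simp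
  · refine (Finset.sum_eq_zero fun k _ => ?_).trans (by simp [hi])
    have : (i : ℕ) ≠ k := fun e => hi (e ▸ k.2)
    simp [rectDiag, this]

lemma rectDiag_self (s : Fin n → ℂ) : rectDiag n s = diagonal s := by
  ext i j
  simp only [rectDiag, of_apply, diagonal_apply, Fin.val_inj]
  split_ifs with hij <;> simp [hij]

/-- The normalised nonzero columns of `X` extend to an orthonormal basis: the columns of `U`. -/
theorem exists_unitary_eq_mul_rectDiag (h : n ≤ m) (X : Matrix (Fin m) (Fin n) ℂ)
    (s : Fin n → ℝ) (hX : Xᴴ * X = diagonal fun j => (s j : ℂ) ^ 2) :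
    ∃ U ∈ unitaryGroup (Fin m) ℂ, X = U * rectDiag m fun j => (s j : ℂ) := by
  let x : Fin n → EuclideanSpace ℂ (Fin m) := fun j => WithLp.toLp 2 fun k => X k j
  have hx : ∀ i j, inner ℂ (x i) (x j) = if i = j then (s i : ℂ) ^ 2 else 0 := by
    intro i j
    rw [← diagonal_apply (fun j => (s j : ℂ) ^ 2), ← hX]
    simp [x, mul_apply, PiLp.inner_apply, mul_comm]
  let v : Fin m → EuclideanSpace ℂ (Fin m) := fun i =>
    if hi : (i : ℕ) < n then ((s ⟨i, hi⟩ : ℂ))⁻¹ • x ⟨i, hi⟩ else 0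
  let S : Set (Fin m) := Fin.castLE h '' {j | s j ≠ 0}
  have hv : ∀ j, v (Fin.castLE h j) = ((s j : ℂ))⁻¹ • x j := fun j => by simp [v]
  have hS : Orthonormal ℂ (S.domRestrict v) := by
    rw [orthonormal_iff_ite]
    rintro ⟨_, hi'⟩ ⟨_, hj'⟩
    obtain ⟨i, hi, rfl⟩ := hi'
    obtain ⟨j, hj, rfl⟩ := hj'
    by_cases hij : i = j
    · subst hij
      have : (s i : ℂ) ≠ 0 := by exact_mod_cast hi
      simp only [Set.domRestrict_apply, hv, inner_smul_left, inner_smul_right, hx, if_true]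
      rw [map_inv₀, Complex.conj_ofReal]
      field_simp
    · have : (⟨_, Set.mem_image_of_mem _ hi⟩ : S) ≠ ⟨_, Set.mem_image_of_mem _ hj⟩ := by
        simpa using hij
      simp [hv, inner_smul_left, inner_smul_right, hx, hij, this]
  obtain ⟨b, hb⟩ := hS.exists_orthonormalBasis_extension_of_card_eq (by simp)
  refine ⟨_, (EuclideanSpace.basisFun (Fin m) ℂ).toMatrix_orthonormalBasis_mem_unitary b, ?_⟩
  ext k j
  rw [mul_rectDiag_apply h]
  simp only [Module.Basis.toMatrix_apply, OrthonormalBasis.coe_toBasis_repr_apply,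
    EuclideanSpace.basisFun_repr]
  by_cases hj : s j = 0
  · have : x j = 0 := inner_self_eq_zero.mp (by rw [hx, if_pos rfl, hj]; simp)
    simpa [hj, x] using congrArg (fun y => y k) this
  · rw [hb _ (Set.mem_image_of_mem _ hj), hv]
    have : (s j : ℂ) ≠ 0 := by exact_mod_cast hj
    simp only [PiLp.smul_apply, smul_eq_mul, x]
    field_simp

end RectDiag

/-- The matrix `M(Γ)` for `Γ = diag γ`. -/
def boostMatrix (c : ℕ) {d : ℕ} (γ : Fin d → ℝ) : Matrix (Fin c ⊕ Fin d) (Fin c ⊕ Fin d) ℂ :=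
  fromBlocks
    (of fun i j : Fin c =>
      if (i : ℕ) = (j : ℕ) then
        (if hi : (i : ℕ) < d then (Real.cosh (γ ⟨i, hi⟩) : ℂ) else 1)
      else 0)
    (rectDiag c fun j => (Real.sinh (γ j) : ℂ))
    (of fun (i : Fin d) (j : Fin c) => if (i : ℕ) = (j : ℕ) then (Real.sinh (γ i) : ℂ) else 0)
    (diagonal fun i => (Real.cosh (γ i) : ℂ))

lemma boostMatrix_eq_fromBlocks {c d : ℕ} (γ : Fin d → ℝ) :
    boostMatrix c γ =
      fromBlocks
        (diagonal fun i : Fin c =>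
          if hi : (i : ℕ) < d then (Real.cosh (γ ⟨i, hi⟩) : ℂ) else 1)
        (rectDiag c fun j => (Real.sinh (γ j) : ℂ))
        (rectDiag c fun j => (Real.sinh (γ j) : ℂ))ᴴ
        (diagonal fun i => (Real.cosh (γ i) : ℂ)) := by
  rw [boostMatrix]
  congr 1
  · ext i j
    simp only [of_apply, diagonal_apply, Fin.val_inj]
  · ext i j
    simp only [of_apply, conjTranspose_apply, rectDiag, eq_comm (a := (j : ℕ))]
    split_ifs
    · exact (Complex.conj_ofReal _).symm
    · simp

theorem boostMatrix_mem_pseudoU {c d : ℕ} (h : d ≤ c) (γ : Fin d → ℝ) :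
    boostMatrix c γ ∈ pseudoU c d := by
  rw [boostMatrix_eq_fromBlocks, fromBlocks_mem_pseudoU_iff, conjTranspose_conjTranspose,
    rectDiag_mul_conjTranspose_rectDiag, conjTranspose_rectDiag_mul_rectDiag h]
  set s : Fin d → ℂ := fun j => (Real.sinh (γ j) : ℂ)
  set δ : Fin c → ℂ := fun i => if hi : (i : ℕ) < d then (Real.cosh (γ ⟨i, hi⟩) : ℂ) else 1
  have hcs : ∀ x : ℝ, (Real.cosh x : ℂ) * Real.cosh x - Real.sinh x * Real.sinh x = 1 := by
    intro x
    exact_mod_cast by nlinarith [Real.cosh_sq x]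
  refine ⟨?_, ?_, ?_⟩
  · rw [diagonal_conjTranspose, diagonal_mul_diagonal, diagonal_sub, ← diagonal_one]
    congr 1
    ext i
    by_cases hi : (i : ℕ) < d
    · simp only [δ, dif_pos hi, Pi.star_apply, Complex.star_def, Complex.conj_ofReal, hcs]
    · simp [δ, hi]
  · ext i j
    simp only [diagonal_conjTranspose, diagonal_mul, mul_diagonal, rectDiag, of_apply,
      Pi.star_apply, Complex.star_def, Matrix.sub_apply, Matrix.zero_apply]
    split_ifs with hij
    · obtain ⟨j, hj⟩ := j
      subst hij
      simp only [δ, s, dif_pos hj, Complex.conj_ofReal, mul_comm, sub_self]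
    · simp
  · rw [diagonal_conjTranspose, diagonal_mul_diagonal, diagonal_sub, ← diagonal_one,
      diagonal_neg]
    congr 1
    ext j
    simp only [Pi.star_apply, Complex.star_def, Complex.conj_ofReal]
    rw [← hcs (γ j)]
    ring

theorem exists_unitary_mul_sinh_cosh_of_conjTranspose_mul_self {c d : ℕ} (hcd : d ≤ c)
    {B : Matrix (Fin c) (Fin d) ℂ} {D : Matrix (Fin d) (Fin d) ℂ} (hBD : Dᴴ * D = Bᴴ * B + 1) :
    ∃ W ∈ unitaryGroup (Fin d) ℂ, ∃ U₁ ∈ unitaryGroup (Fin c) ℂ, ∃ U₂ ∈ unitaryGroup (Fin d) ℂ,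
      ∃ γ : Fin d → ℝ, Antitone γ ∧ (∀ j, 0 ≤ γ j) ∧
        B * W = U₁ * rectDiag c (fun j => (Real.sinh (γ j) : ℂ)) ∧
        D * W = U₂ * diagonal (fun j => (Real.cosh (γ j) : ℂ)) := by
  obtain ⟨W, hW, μ, hμ, hBW⟩ :=
    (isHermitian_conjTranspose_mul_self B).exists_unitary_conjTranspose_mul_mul_eq_diagonal_antitone
  simp only [RCLike.ofReal_eq_complex_ofReal] at hBW
  have hWW : Wᴴ * W = 1 := mem_unitaryGroup_iff'.mp hW
  have hgram : ∀ {k : ℕ} (X : Matrix (Fin k) (Fin d) ℂ), (X * W)ᴴ * (X * W) = Wᴴ * (Xᴴ * X) * W :=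
    fun X => by simp only [conjTranspose_mul, Matrix.mul_assoc]
  have hμ0 : ∀ j, 0 ≤ μ j := fun j => by
    have := (posSemidef_conjTranspose_mul_self (B * W)).diag_nonneg (i := j)
    rwa [hgram, hBW, diagonal_apply_eq, Complex.zero_le_real] at this
  set γ : Fin d → ℝ := fun j => Real.arsinh √(μ j)
  have hsinh : ∀ j, (Real.sinh (γ j) : ℂ) ^ 2 = μ j := fun j => by
    simp only [γ, Real.sinh_arsinh]
    exact_mod_cast Real.sq_sqrt (hμ0 j)
  have hcosh : ∀ j, (Real.cosh (γ j) : ℂ) ^ 2 = μ j + 1 := fun j => by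
    rw [← hsinh j]
    exact_mod_cast Real.cosh_sq (γ j)
  obtain ⟨U₁, hU₁, hB⟩ := exists_unitary_eq_mul_rectDiag hcd (B * W) (fun j => Real.sinh (γ j))
    (by simp only [hgram, hBW, hsinh])
  obtain ⟨U₂, hU₂, hD⟩ := exists_unitary_eq_mul_rectDiag le_rfl (D * W) (fun j => Real.cosh (γ j))
    (by rw [hgram, hBD, Matrix.mul_add, Matrix.add_mul, hBW, Matrix.mul_one,
      hWW, ← diagonal_one, diagonal_add]; simp only [hcosh])
  refine ⟨W, hW, U₁, hU₁, U₂, hU₂, γ, fun i j hij => ?_, fun j => ?_, hB, rectDiag_self _ ▸ hD⟩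
  · exact Real.arsinh_le_arsinh.mpr (Real.sqrt_le_sqrt (hμ hij))
  · exact Real.arsinh_nonneg_iff.mpr (Real.sqrt_nonneg _)

/-- Structure theorem: every `T ∈ U(c,d)` with `c ≥ d` decomposes as
`diag(U₁,U₂) · M(Γ) · diag(V₁,V₂)` with `U₁,V₁ ∈ U(c)`, `U₂,V₂ ∈ U(d)` and
`Γ = diag(γ₁ ≥ … ≥ γ_d ≥ 0)`, where `M(Γ)` has blocks `diag(cosh Γ, 1_{c-d})`,
`(sinh Γ; 0)`, `(sinh Γ, 0)` and `cosh Γ`. -/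
theorem stmt3 (c d : ℕ) (hcd : d ≤ c) (T : Matrix (Fin c ⊕ Fin d) (Fin c ⊕ Fin d) ℂ)
    (hT : T ∈ pseudoU c d) :
    ∃ (U₁ V₁ : Matrix (Fin c) (Fin c) ℂ) (U₂ V₂ : Matrix (Fin d) (Fin d) ℂ) (γ : Fin d → ℝ),
      U₁ ∈ Matrix.unitaryGroup (Fin c) ℂ ∧ V₁ ∈ Matrix.unitaryGroup (Fin c) ℂ ∧
      U₂ ∈ Matrix.unitaryGroup (Fin d) ℂ ∧ V₂ ∈ Matrix.unitaryGroup (Fin d) ℂ ∧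
      Antitone γ ∧ (∀ i, 0 ≤ γ i) ∧
      T = Matrix.fromBlocks U₁ 0 0 U₂ *
          Matrix.fromBlocks
            (Matrix.of fun i j : Fin c =>
              if (i : ℕ) = (j : ℕ) then
                (if hi : (i : ℕ) < d then (Real.cosh (γ ⟨i, hi⟩) : ℂ) else 1)
              else 0)
            (Matrix.of fun (i : Fin c) (j : Fin d) =>
              if (i : ℕ) = (j : ℕ) then (Real.sinh (γ j) : ℂ) else 0)
            (Matrix.of fun (i : Fin d) (j : Fin c) =>
              if (i : ℕ) = (j : ℕ) then (Real.sinh (γ i) : ℂ) else 0)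
            (Matrix.diagonal fun i => (Real.cosh (γ i) : ℂ)) *
          Matrix.fromBlocks V₁ 0 0 V₂ := by
  obtain ⟨A, B, C, D, rfl⟩ : ∃ A B C D, T = fromBlocks A B C D :=
    ⟨_, _, _, _, (fromBlocks_toBlocks T).symm⟩
  have hBD : Dᴴ * D = Bᴴ * B + 1 := by
    obtain ⟨-, -, h⟩ := fromBlocks_mem_pseudoU_iff.mp hT
    rw [← neg_neg (1 : Matrix _ _ ℂ), ← h]
    abel
  obtain ⟨W, hW, U₁, hU₁, U₂, hU₂, γ, hγ, hγ0, hB, hD⟩ :=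
    exists_unitary_mul_sinh_cosh_of_conjTranspose_mul_self hcd hBD
  obtain ⟨V₁, hV₁, hTV⟩ := exists_eq_mul_fromBlocks_one_of_mul_eq
    (mul_mem_pseudoU (fromBlocks_mem_pseudoU_of_mem_unitaryGroup hU₁ hU₂)
      (boostMatrix_mem_pseudoU hcd γ))
    (mul_mem_pseudoU hT (fromBlocks_mem_pseudoU_of_mem_unitaryGroup (one_mem _) hW))
    (by simp [fromBlocks_multiply, boostMatrix, hB, hD])
  refine ⟨U₁, V₁, U₂, Wᴴ, γ, hU₁, hV₁, hU₂, ?_, hγ, hγ0, ?_⟩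
  · simpa only [star_eq_conjTranspose] using Unitary.star_mem hW
  have hWW : W * Wᴴ = 1 := mem_unitaryGroup_iff.mp hW
  calc fromBlocks A B C D = fromBlocks A B C D * fromBlocks 1 0 0 W * fromBlocks 1 0 0 Wᴴ := by
        simp [Matrix.mul_assoc, fromBlocks_multiply, hWW]
    _ = fromBlocks U₁ 0 0 U₂ * boostMatrix c γ * fromBlocks V₁ 0 0 Wᴴ := by
        simp [hTV, Matrix.mul_assoc, fromBlocks_multiply]

end
end

section
/- Let T ∈ U(c,d) with c ≥ d. The singular values of T, listed in decreasing order σ_1 ≥ ... ≥ σ_{c+d}, satisfy: σ_{c+d+1-i}(T) = σ_i(T)^{-1} for i = 1,...,d, and σ_i(T) = 1 for d < i ≤ c. In particular, the singular values come in reciprocal pairs with all remaining ones equal to 1. -/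
open Matrix MeasureTheory Filter
open scoped ComplexOrder
noncomputable section

/-!
Put `A = Tᴴ T` and `G = G_{c,d}`. From `Tᴴ G T = G` and `G² = 1` one gets `A⁻¹ = G A G`, so `A⁻¹`
and `A` have the same characteristic polynomial and the eigenvalues of `A` are closed under
inversion; listing them in order pairs `σ_{c+d+1-i}` with `σ_i⁻¹`. On the subspace where the last
`d` coordinates of `T x` vanish, `‖T x‖² = ⟨T x, G T x⟩ = ⟨x, G x⟩ ≤ ‖x‖²`, so this subspace, of
codimension at most `d`, meets the span of the eigenvectors of `A` with eigenvalue `> 1` trivially.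
Hence at most `d` singular values exceed `1`, by the pairing at most `d` lie below `1`, and the
middle ones equal `1`.
-/

open Polynomial

namespace Matrix

variable {m : Type*} [Fintype m]

lemma star_mulVec_dotProduct_mulVec_mulVec {n α : Type*} [Fintype n] [CommSemiring α] [StarRing α]
    (B : Matrix n m α) (M : Matrix n n α) (x y : m → α) :
    star (B *ᵥ x) ⬝ᵥ (M *ᵥ (B *ᵥ y)) = star x ⬝ᵥ ((Bᴴ * M * B) *ᵥ y) := by
  rw [mulVec_mulVec, star_mulVec, dotProduct_mulVec, vecMul_vecMul, dotProduct_mulVec,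
    Matrix.mul_assoc]

lemma re_star_dotProduct_self (x : m → ℂ) : (star x ⬝ᵥ x).re = ∑ j, Complex.normSq (x j) := by
  simp [dotProduct, Complex.re_sum, Complex.normSq_apply, Complex.mul_re]

variable [DecidableEq m]

lemma re_star_dotProduct_diagonal_mulVec (s : m → ℝ) (x : m → ℂ) :
    (star x ⬝ᵥ (diagonal (fun j => (s j : ℂ)) *ᵥ x)).re = ∑ j, s j * Complex.normSq (x j) := by
  simp only [dotProduct, mulVec_diagonal, Complex.re_sum, Pi.star_apply, Complex.star_def,
    Complex.normSq_apply]
  refine Finset.sum_congr rfl fun j _ => ?_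
  simp only [Complex.mul_re, Complex.conj_re, Complex.conj_im, Complex.ofReal_re,
    Complex.ofReal_im, Complex.mul_im]
  ring

namespace IsHermitian

variable {A : Matrix m m ℂ} (hA : A.IsHermitian)

lemma re_star_dotProduct_mulVec_eigenvectorUnitary (y : m → ℂ) :
    (star ((hA.eigenvectorUnitary : Matrix m m ℂ) *ᵥ y) ⬝ᵥ
      (A *ᵥ ((hA.eigenvectorUnitary : Matrix m m ℂ) *ᵥ y))).re =
      ∑ j, hA.eigenvalues j * Complex.normSq (y j) := by
  rw [star_mulVec_dotProduct_mulVec_mulVec, ← star_eq_conjTranspose,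
    ← Unitary.conjStarAlgAut_star_apply (S := ℂ), hA.conjStarAlgAut_star_eigenvectorUnitary]
  exact re_star_dotProduct_diagonal_mulVec _ y

lemma re_star_dotProduct_eigenvectorUnitary_mulVec (y : m → ℂ) :
    (star ((hA.eigenvectorUnitary : Matrix m m ℂ) *ᵥ y) ⬝ᵥ
      ((hA.eigenvectorUnitary : Matrix m m ℂ) *ᵥ y)).re = ∑ j, Complex.normSq (y j) := by
  have := star_mulVec_dotProduct_mulVec_mulVec (hA.eigenvectorUnitary : Matrix m m ℂ) 1 y y
  rw [one_mulVec, mul_one, ← star_eq_conjTranspose, Unitary.coe_star_mul_self,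
    one_mulVec] at this
  rw [this, re_star_dotProduct_self]

theorem card_one_lt_eigenvalues_le {E : Type*} [AddCommGroup E] [Module ℂ E]
    [FiniteDimensional ℂ E] (L : (m → ℂ) →ₗ[ℂ] E)
    (hL : ∀ x, L x = 0 → (star x ⬝ᵥ (A *ᵥ x)).re ≤ (star x ⬝ᵥ x).re) :
    Fintype.card {j // 1 < hA.eigenvalues j} ≤ Module.finrank ℂ E := by
  set U : Matrix m m ℂ := (hA.eigenvectorUnitary : Matrix m m ℂ)
  let extend :=
    Function.ExtendByZero.linearMap ℂ (Subtype.val : {j // 1 < hA.eigenvalues j} → m)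
  -- `U ∘ extend` parametrizes the span of the eigenvectors with eigenvalue `> 1`, on which the
  -- form of `A` exceeds the norm; so it meets `ker L` trivially.
  have hinj : Function.Injective (L ∘ₗ U.mulVecLin ∘ₗ extend) := by
    rw [← LinearMap.ker_eq_bot, LinearMap.ker_eq_bot']
    intro v hv
    set y := extend v
    have hy : ∀ j, ¬ 1 < hA.eigenvalues j → y j = 0 := fun j hj =>
      Function.extend_apply' _ _ _ fun ⟨k, hk⟩ => hj (hk ▸ k.2)
    have hle : ∑ j, hA.eigenvalues j * Complex.normSq (y j) ≤ ∑ j, Complex.normSq (y j) := by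
      rw [← hA.re_star_dotProduct_mulVec_eigenvectorUnitary,
        ← hA.re_star_dotProduct_eigenvectorUnitary_mulVec]
      exact hL _ hv
    have hterm : ∀ j, (hA.eigenvalues j - 1) * Complex.normSq (y j) = 0 := by
      have hnonneg :
          ∀ j ∈ Finset.univ, 0 ≤ (hA.eigenvalues j - 1) * Complex.normSq (y j) := by
        intro j _
        by_cases hj : 1 < hA.eigenvalues j
        · exact mul_nonneg (by linarith) (Complex.normSq_nonneg _)
        · simp [hy j hj]
      have hsum : ∑ j, (hA.eigenvalues j - 1) * Complex.normSq (y j) ≤ 0 := by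
        simp only [sub_mul, one_mul, Finset.sum_sub_distrib]
        linarith
      intro j
      exact (Finset.sum_eq_zero_iff_of_nonneg hnonneg).mp
        (hsum.antisymm (Finset.sum_nonneg hnonneg)) j (Finset.mem_univ j)
    funext k
    have hyk : y k = v k := Subtype.val_injective.extend_apply _ _ k
    simpa [hyk, (sub_pos.mpr k.2).ne'] using hterm k
  simpa using LinearMap.finrank_le_finrank_of_injective hinj

lemma charpoly_inv (h0 : ∀ i, hA.eigenvalues i ≠ 0) :
    A⁻¹.charpoly = ∏ i, (X - C ((hA.eigenvalues i : ℂ)⁻¹)) := by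
  set U : Matrix m m ℂ := (hA.eigenvectorUnitary : Matrix m m ℂ)
  have hUU : star U * U = 1 := Unitary.coe_star_mul_self _
  have hUU' : U * star U = 1 := Unitary.coe_mul_star_self _
  have hinv : A⁻¹ = U * diagonal (fun i => (hA.eigenvalues i : ℂ)⁻¹) * star U := by
    refine inv_eq_right_inv ?_
    calc A * (U * diagonal (fun i => (hA.eigenvalues i : ℂ)⁻¹) * star U)
        = U * diagonal (RCLike.ofReal ∘ hA.eigenvalues) * star U *
          (U * diagonal (fun i => (hA.eigenvalues i : ℂ)⁻¹) * star U) :=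
        congrArg (· * _) hA.spectral_theorem
      _ = U * (diagonal (RCLike.ofReal ∘ hA.eigenvalues) * (star U * U) *
          diagonal (fun i => (hA.eigenvalues i : ℂ)⁻¹)) * star U := by simp only [mul_assoc]
      _ = 1 := by
        rw [hUU, mul_one, diagonal_mul_diagonal]
        simp [h0, hUU']
  rw [hinv, charpoly_mul_comm, ← mul_assoc, hUU, one_mul, charpoly_diagonal]

lemma map_inv_eigenvalues_eq (h0 : ∀ i, hA.eigenvalues i ≠ 0)
    (h : A⁻¹.charpoly = A.charpoly) :
    Finset.univ.val.map (fun i => (hA.eigenvalues i)⁻¹) =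
      Finset.univ.val.map hA.eigenvalues := by
  have hroots := congrArg Polynomial.roots h
  rw [hA.roots_charpoly_eq_eigenvalues, hA.charpoly_inv h0, Polynomial.roots_prod _ _
    (Finset.prod_ne_zero_iff.mpr fun i _ => X_sub_C_ne_zero _)] at hroots
  refine Multiset.map_injective Complex.ofReal_injective ?_
  simpa [Multiset.map_map, Function.comp_def] using hroots

end IsHermitian

lemma eigenvalues_conjTranspose_mul_self_pos (T : Matrix m m ℂ) (hdet : IsUnit T.det) (j : m) :
    0 < (isHermitian_conjTranspose_mul_self T).eigenvalues j :=
  (PosDef.conjTranspose_mul_self T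
    (mulVec_injective_iff_isUnit.mpr ((isUnit_iff_isUnit_det T).mpr hdet))).eigenvalues_pos j

section PseudoUnitary

variable {T G : Matrix m m ℂ}

lemma mul_mul_conjTranspose_eq_of_conjTranspose_mul_mul_eq (hG : G * G = 1)
    (hT : Tᴴ * G * T = G) : T * G * Tᴴ = G := by
  have hleft : (G * Tᴴ * G) * T = 1 := by rw [mul_assoc G, mul_assoc, hT, hG]
  have hright : T * (G * Tᴴ * G) = 1 := mul_eq_one_comm.mp hleft
  calc T * G * Tᴴ = T * (G * Tᴴ * G) * G := by simp only [mul_assoc, hG, mul_one]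
    _ = G := by rw [hright, one_mul]

lemma inv_conjTranspose_mul_self_eq (hG : G * G = 1) (hT : Tᴴ * G * T = G) :
    (Tᴴ * T)⁻¹ = G * (Tᴴ * T) * G := by
  refine inv_eq_right_inv ?_
  calc Tᴴ * T * (G * (Tᴴ * T) * G) = Tᴴ * (T * G * Tᴴ) * T * G := by simp only [mul_assoc]
    _ = 1 := by rw [mul_mul_conjTranspose_eq_of_conjTranspose_mul_mul_eq hG hT, hT, hG]

lemma isUnit_det_of_conjTranspose_mul_mul_eq (hG : G * G = 1) (hT : Tᴴ * G * T = G) :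
    IsUnit T.det :=
  isUnit_det_of_left_inverse (B := G * Tᴴ * G) (by rw [mul_assoc G, mul_assoc, hT, hG])

lemma charpoly_inv_conjTranspose_mul_self (hG : G * G = 1) (hT : Tᴴ * G * T = G) :
    (Tᴴ * T)⁻¹.charpoly = (Tᴴ * T).charpoly := by
  rw [inv_conjTranspose_mul_self_eq hG hT, charpoly_mul_comm, ← mul_assoc, hG, one_mul]

theorem card_one_lt_eigenvalues_conjTranspose_mul_self_le {s : m → ℝ} (hs : ∀ j, s j ≤ 1)
    (hT : Tᴴ * diagonal (fun j => (s j : ℂ)) * T = diagonal (fun j => (s j : ℂ))) :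
    Fintype.card {j // 1 < (isHermitian_conjTranspose_mul_self T).eigenvalues j} ≤
      Fintype.card {j // s j ≠ 1} := by
  have key := (isHermitian_conjTranspose_mul_self T).card_one_lt_eigenvalues_le
    (LinearMap.funLeft ℂ ℂ (Subtype.val : {j // s j ≠ 1} → m) ∘ₗ T.mulVecLin) fun x hx => by
      have hTx : ∀ j, s j ≠ 1 → (T *ᵥ x) j = 0 := fun j hj => congrFun hx ⟨j, hj⟩
      have hnorm := star_mulVec_dotProduct_mulVec_mulVec T 1 x x
      rw [one_mulVec, mul_one] at hnorm
      have hform := star_mulVec_dotProduct_mulVec_mulVec T (diagonal fun j => (s j : ℂ)) x x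
      rw [hT] at hform
      calc (star x ⬝ᵥ ((Tᴴ * T) *ᵥ x)).re = ∑ j, Complex.normSq ((T *ᵥ x) j) := by
            rw [← hnorm, re_star_dotProduct_self]
        _ = ∑ j, s j * Complex.normSq ((T *ᵥ x) j) := by
            refine Finset.sum_congr rfl fun j _ => ?_
            by_cases hj : s j = 1
            · rw [hj, one_mul]
            · rw [hTx j hj, map_zero, mul_zero]
        _ = ∑ j, s j * Complex.normSq (x j) := by
            rw [← re_star_dotProduct_diagonal_mulVec, hform, re_star_dotProduct_diagonal_mulVec]
        _ ≤ ∑ j, Complex.normSq (x j) :=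
            Finset.sum_le_sum fun j _ =>
              mul_le_of_le_one_left (Complex.normSq_nonneg _) (hs j)
        _ = (star x ⬝ᵥ x).re := (re_star_dotProduct_self x).symm
  simpa using key

end PseudoUnitary
end Matrix

namespace Tuple

variable {n : ℕ}

lemma eq_of_monotone_of_map_univ_eq {α : Type*} [LinearOrder α] {f g : Fin n → α}
    (hf : Monotone f) (hg : Monotone g)
    (h : Finset.univ.val.map f = Finset.univ.val.map g) : f = g := by
  have hperm : (List.ofFn f).Perm (List.ofFn g) := by
    rw [← Multiset.coe_eq_coe, ← Fin.univ_val_map, ← Fin.univ_val_map, h]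
  exact List.ofFn_injective (hperm.eq_of_sortedLE hf.sortedLE_ofFn hg.sortedLE_ofFn)

lemma comp_sort_eq_inv_comp_sort_rev {f : Fin n → ℝ} (hpos : ∀ i, 0 < f i)
    (hinv : Finset.univ.val.map (fun i => (f i)⁻¹) = Finset.univ.val.map f) (i : Fin n) :
    (f ∘ sort f) i = ((f ∘ sort f) i.rev)⁻¹ := by
  have hmono : Monotone fun i : Fin n => ((f ∘ sort f) i.rev)⁻¹ := fun i j hij =>
    inv_anti₀ (hpos _) (monotone_sort f (Fin.rev_le_rev.mpr hij))
  have hmap : Finset.univ.val.map (fun i : Fin n => ((f ∘ sort f) i.rev)⁻¹) =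
      Finset.univ.val.map (f ∘ sort f) := by
    calc Finset.univ.val.map (fun i : Fin n => ((f ∘ sort f) i.rev)⁻¹)
        = ((Finset.univ.val.map Fin.revPerm).map (sort f)).map fun i => (f i)⁻¹ := by
          simp only [Multiset.map_map]; rfl
      _ = Finset.univ.val.map (f ∘ sort f) := by
          rw [Multiset.map_univ_val_equiv, Multiset.map_univ_val_equiv, hinv, ← Multiset.map_map,
            Multiset.map_univ_val_equiv]
  exact congrFun (eq_of_monotone_of_map_univ_eq (monotone_sort f) hmono hmap.symm) i

end Tuple

lemma Antitone.val_lt_of_one_lt {n d : ℕ} {σ : Fin n → ℝ} (hσ : Antitone σ)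
    (hcard : Fintype.card {i // 1 < σ i} ≤ d) {i : Fin n} (hi : 1 < σ i) : (i : ℕ) < d := by
  have hsub : Finset.Iic i ⊆ Finset.univ.filter fun j => 1 < σ j := fun j hj =>
    Finset.mem_filter.mpr ⟨Finset.mem_univ j, hi.trans_le (hσ (Finset.mem_Iic.mp hj))⟩
  have := (Finset.card_le_card hsub).trans ((Fintype.card_subtype _).symm.trans_le hcard)
  rw [Fin.card_Iic] at this
  omega

lemma Antitone.eq_one_of_rev_eq_inv {n d : ℕ} {σ : Fin n → ℝ} (hσ : Antitone σ)
    (hpos : ∀ i, 0 < σ i) (hrev : ∀ i, σ i.rev = (σ i)⁻¹)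
    (hcard : Fintype.card {i // 1 < σ i} ≤ d) {i : Fin n} (hdi : d ≤ i) (hin : i + d < n) :
    σ i = 1 := by
  rcases lt_trichotomy (σ i) 1 with hlt | heq | hgt
  · have := hσ.val_lt_of_one_lt hcard (i := i.rev)
      (by rw [hrev]; exact (one_lt_inv₀ (hpos i)).mpr hlt)
    rw [Fin.val_rev] at this
    omega
  · exact heq
  · exact absurd (hσ.val_lt_of_one_lt hcard hgt) (by omega)

section SingularValues

variable {n : ℕ} (T : Matrix (Fin n) (Fin n) ℂ)

lemma sv_antitone : Antitone (sv T) := fun _ _ hij =>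
  Real.sqrt_le_sqrt
    (Tuple.monotone_sort (isHermitian_conjTranspose_mul_self T).eigenvalues
      (Fin.rev_le_rev.mpr hij))

lemma sv_pos (hdet : IsUnit T.det) (i : Fin n) : 0 < sv T i :=
  Real.sqrt_pos.mpr (eigenvalues_conjTranspose_mul_self_pos T hdet _)

lemma sv_rev_eq_inv (hdet : IsUnit T.det) (h : (Tᴴ * T)⁻¹.charpoly = (Tᴴ * T).charpoly)
    (i : Fin n) : sv T i.rev = (sv T i)⁻¹ := by
  have hpos := eigenvalues_conjTranspose_mul_self_pos T hdet
  simp only [sv, Fin.rev_rev]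
  rw [← Real.sqrt_inv]
  congr 1
  exact Tuple.comp_sort_eq_inv_comp_sort_rev hpos
    ((isHermitian_conjTranspose_mul_self T).map_inv_eigenvalues_eq (fun j => (hpos j).ne') h) i

lemma card_one_lt_sv :
    Fintype.card {i // 1 < sv T i} =
      Fintype.card {j // 1 < (isHermitian_conjTranspose_mul_self T).eigenvalues j} :=
  Fintype.card_congr <|
    (Fin.revPerm.trans (Tuple.sort (isHermitian_conjTranspose_mul_self T).eigenvalues)).subtypeEquiv
      fun i => by simp [sv, Real.lt_sqrt zero_le_one]

end SingularValues

section PseudoUnitaryGroup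

variable {c d : ℕ}

def gcdSign (c d : ℕ) : Fin c ⊕ Fin d → ℝ := Sum.elim (fun _ => 1) (fun _ => -1)

lemma gcdSign_le_one (x : Fin c ⊕ Fin d) : gcdSign c d x ≤ 1 := by
  cases x <;> norm_num [gcdSign]

lemma diagonal_gcdSign_comp_mul_self {ι : Type*} [Fintype ι] [DecidableEq ι]
    (e : ι → Fin c ⊕ Fin d) :
    (diagonal fun j => (gcdSign c d (e j) : ℂ)) * (diagonal fun j => (gcdSign c d (e j) : ℂ)) =
      1 := by
  rw [diagonal_mul_diagonal, ← diagonal_one]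
  congr 1
  ext j
  cases e j <;> norm_num [gcdSign]

lemma card_gcdSign_ne_one : Fintype.card {x // gcdSign c d x ≠ 1} = d := by
  rw [Fintype.card_subtype, Finset.card_filter, Fintype.sum_sum_type]
  norm_num [gcdSign]

lemma Gcd_eq_diagonal : Gcd c d = diagonal fun x => (gcdSign c d x : ℂ) := by
  ext (i | i) (j | j) <;> simp [Gcd, gcdSign, diagonal_apply, one_apply, apply_ite]

lemma conjTranspose_submatrix_mul_mul_submatrix_of_mem_pseudoU {ι : Type*} [Fintype ι]
    [DecidableEq ι] (e : ι ≃ Fin c ⊕ Fin d) {T : Matrix (Fin c ⊕ Fin d) (Fin c ⊕ Fin d) ℂ}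
    (hT : T ∈ pseudoU c d) :
    (T.submatrix e e)ᴴ * diagonal (fun j => (gcdSign c d (e j) : ℂ)) * T.submatrix e e =
      diagonal fun j => (gcdSign c d (e j) : ℂ) := by
  have h := congrArg (·.submatrix e e) hT
  simp only [Gcd_eq_diagonal, submatrix_diagonal_equiv] at h
  rwa [← submatrix_mul_equiv _ _ _ e, ← submatrix_mul_equiv _ _ _ e, ← conjTranspose_submatrix,
    submatrix_diagonal_equiv] at h

end PseudoUnitaryGroup

theorem stmt4_general (c d : ℕ) (T : Matrix (Fin c ⊕ Fin d) (Fin c ⊕ Fin d) ℂ)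
    (hT : T ∈ pseudoU c d) :
    (∀ i : Fin (c + d), (i : ℕ) < d → svS T i.rev = (svS T i)⁻¹) ∧
    (∀ i : Fin (c + d), d ≤ (i : ℕ) → (i : ℕ) < c → svS T i = 1) := by
  set e : Fin (c + d) ≃ Fin c ⊕ Fin d := finSumFinEquiv.symm
  set T' := T.submatrix e e
  set G : Matrix (Fin (c + d)) (Fin (c + d)) ℂ := diagonal fun j => (gcdSign c d (e j) : ℂ)
  have hT' : T'ᴴ * G * T' = G := conjTranspose_submatrix_mul_mul_submatrix_of_mem_pseudoU e hT
  have hG : G * G = 1 := diagonal_gcdSign_comp_mul_self e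
  have hunit : IsUnit T'.det := isUnit_det_of_conjTranspose_mul_mul_eq hG hT'
  have hrev : ∀ i, sv T' i.rev = (sv T' i)⁻¹ :=
    sv_rev_eq_inv T' hunit (charpoly_inv_conjTranspose_mul_self hG hT')
  have hcard : Fintype.card {i // 1 < sv T' i} ≤ d := by
    calc Fintype.card {i // 1 < sv T' i}
        = Fintype.card {j // 1 < (isHermitian_conjTranspose_mul_self T').eigenvalues j} :=
          card_one_lt_sv T'
      _ ≤ Fintype.card {j // gcdSign c d (e j) ≠ 1} :=
          card_one_lt_eigenvalues_conjTranspose_mul_self_le (fun j => gcdSign_le_one (e j)) hT'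
      _ = Fintype.card {x // gcdSign c d x ≠ 1} :=
          Fintype.card_congr (e.subtypeEquiv fun _ => Iff.rfl)
      _ = d := card_gcdSign_ne_one
  exact ⟨fun i _ => hrev i, fun i hdi hic =>
    (sv_antitone T').eq_one_of_rev_eq_inv (sv_pos T' hunit) hrev hcard hdi (by omega)⟩

/-- The singular values of `T ∈ U(c,d)` (decreasingly ordered) come in reciprocal pairs
`σ_{c+d+1-i} = σ_i⁻¹` for `i ≤ d`, and `σ_i = 1` for `d < i ≤ c`. -/
theorem stmt4 (c d : ℕ) (hcd : d ≤ c) (T : Matrix (Fin c ⊕ Fin d) (Fin c ⊕ Fin d) ℂ)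
    (hT : T ∈ pseudoU c d) :
    (∀ i : Fin (c + d), (i : ℕ) < d → svS T i.rev = (svS T i)⁻¹) ∧
    (∀ i : Fin (c + d), d ≤ (i : ℕ) → (i : ℕ) < c → svS T i = 1) :=
  stmt4_general c d T hT

end
end

section
/- The group HSp(2) of 2×2 complex matrices T with T* J T = J (J = [[0,1],[-1,0]]) equals the set {e^{iφ} A : φ ∈ ℝ, A ∈ SL(2,ℝ)}, i.e. HSp(2) = S^1 · SL(2,ℝ). -/
open Matrix MeasureTheory Filter
open scoped ComplexOrder
noncomputable section

/-! For a `2 × 2` matrix `M` over a commutative ring, `Mᵀ J M = (det M) J`. Comparing this with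
`Tᴴ J T = J` shows that `|det T| = 1` and `Tᴴ = conj (det T) • Tᵀ`, i.e. `conj T = conj (det T) • T`.
If `e^{iφ}` is a square root of `det T`, then `e^{-iφ} T` is therefore fixed by conjugation, so it
is a real matrix, and its determinant is `e^{-2iφ} det T = 1`. -/

section CommRing

variable {R : Type*} [CommRing R]

theorem transpose_mul_J_mul_self (M : Matrix (Fin 2) (Fin 2) R) :
    Mᵀ * !![0, 1; -1, 0] * M = M.det • !![0, 1; -1, 0] := by
  ext i j
  fin_cases i <;> fin_cases j <;> simp [Matrix.mul_apply, Fin.sum_univ_two, det_fin_two] <;> ring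

variable [StarRing R] {T : Matrix (Fin 2) (Fin 2) R}

theorem star_det_mul_det_eq_one_of_conjTranspose_mul_J_mul_self
    (h : Tᴴ * !![0, 1; -1, 0] * T = !![0, 1; -1, 0]) : star T.det * T.det = 1 := by
  simpa [det_mul, det_conjTranspose, det_fin_two] using congrArg det h

theorem conjTranspose_eq_star_det_smul_transpose
    (h : Tᴴ * !![0, 1; -1, 0] * T = !![0, 1; -1, 0]) : Tᴴ = star T.det • Tᵀ := by
  have hdet := star_det_mul_det_eq_one_of_conjTranspose_mul_J_mul_self h
  have hJT : IsUnit (!![0, 1; -1, 0] * T) := by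
    rw [isUnit_iff_isUnit_det, det_mul]
    simpa [det_fin_two] using IsUnit.of_mul_eq_one_right _ hdet
  refine hJT.mul_right_cancel ?_
  calc Tᴴ * (!![0, 1; -1, 0] * T) = (star T.det * T.det) • !![0, 1; -1, 0] := by
        rw [hdet, one_smul, ← Matrix.mul_assoc, h]
    _ = star T.det • Tᵀ * (!![0, 1; -1, 0] * T) := by
        rw [← smul_smul, ← transpose_mul_J_mul_self, Matrix.smul_mul, Matrix.mul_assoc]

end CommRing

namespace Complex

theorem star_exp_ofReal_mul_I_mul_self (φ : ℝ) : star (exp (φ * I)) * exp (φ * I) = 1 := by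
  rw [star_def, conj_mul', norm_exp_ofReal_mul_I]
  simp

theorem exists_exp_ofReal_mul_I_sq_eq {z : ℂ} (hz : star z * z = 1) :
    ∃ φ : ℝ, exp (φ * I) ^ 2 = z := by
  have hnorm : ‖z‖ = 1 := by
    rw [star_def, conj_mul'] at hz
    exact (pow_eq_one_iff_of_nonneg (norm_nonneg z) two_ne_zero).1 (by exact_mod_cast hz)
  refine ⟨z.arg / 2, ?_⟩
  conv_rhs => rw [← norm_mul_exp_arg_mul_I z, hnorm]
  rw [← exp_nat_mul]
  push_cast
  ring_nf

end Complex

theorem det_map_ofReal {n : Type*} [Fintype n] [DecidableEq n] (A : Matrix n n ℝ) :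
    (A.map Complex.ofReal).det = A.det :=
  (Complex.ofRealHom.map_det A).symm

theorem map_re_map_ofReal_of_forall_star_eq {m n : Type*} {A : Matrix m n ℂ}
    (h : ∀ i j, star (A i j) = A i j) : (A.map Complex.re).map Complex.ofReal = A := by
  ext i j
  exact Complex.conj_eq_iff_re.1 (h i j)

theorem conjTranspose_smul_map_ofReal_mul_J_mul (c : ℂ) (A : Matrix (Fin 2) (Fin 2) ℝ) :
    (c • A.map Complex.ofReal)ᴴ * !![0, 1; -1, 0] * (c • A.map Complex.ofReal) =
      (star c * c * A.det) • !![0, 1; -1, 0] := by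
  have hreal : (A.map Complex.ofReal)ᴴ = (A.map Complex.ofReal)ᵀ := by
    ext i j
    simp
  rw [conjTranspose_smul, hreal, Matrix.smul_mul, Matrix.mul_smul, Matrix.smul_mul,
    transpose_mul_J_mul_self, smul_smul, smul_smul, mul_comm c, det_map_ofReal]

open Complex in
theorem exists_exp_smul_map_ofReal_of_conjTranspose_mul_J_mul_self
    {T : Matrix (Fin 2) (Fin 2) ℂ} (h : Tᴴ * !![0, 1; -1, 0] * T = !![0, 1; -1, 0]) :
    ∃ (φ : ℝ) (A : Matrix (Fin 2) (Fin 2) ℝ), A.det = 1 ∧ T = exp (φ * I) • A.map ofReal := by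
  have hdet := star_det_mul_det_eq_one_of_conjTranspose_mul_J_mul_self h
  have hconj := conjTranspose_eq_star_det_smul_transpose h
  obtain ⟨φ, hφ⟩ := exists_exp_ofReal_mul_I_sq_eq hdet
  have hw := star_exp_ofReal_mul_I_mul_self φ
  set w := exp (φ * I)
  set A := star w • T
  have hA : ∀ i j, star (A i j) = A i j := by
    intro i j
    have hij : star (T i j) = star T.det * T i j := by
      simpa using congrFun (congrFun hconj j) i
    simp only [A, Matrix.smul_apply, smul_eq_mul, star_mul', star_star, hij, ← hφ, star_pow]
    linear_combination (star w * T i j) * hw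
  refine ⟨φ, A.map re, ?_, ?_⟩
  · apply ofReal_injective
    rw [← det_map_ofReal, map_re_map_ofReal_of_forall_star_eq hA, det_smul, ← hφ,
      Fintype.card_fin, ofReal_one]
    linear_combination (star w * w + 1) * hw
  · rw [map_re_map_ofReal_of_forall_star_eq hA, smul_smul, mul_comm, hw, one_smul]

/-- `HSp(2) = S¹ · SL(2,ℝ)`: the set of `T` with `Tᴴ J T = J` equals the set of matrices
`e^{iφ} A` with `φ ∈ ℝ` and `A ∈ SL(2,ℝ)`. -/
theorem stmt10 :
    { T : Matrix (Fin 2) (Fin 2) ℂ |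
        Tᴴ * (!![0, 1; -1, 0] : Matrix (Fin 2) (Fin 2) ℂ) * T = !![0, 1; -1, 0] } =
      { T : Matrix (Fin 2) (Fin 2) ℂ |
        ∃ (φ : ℝ) (A : Matrix (Fin 2) (Fin 2) ℝ),
          A.det = 1 ∧ T = Complex.exp ((φ : ℂ) * Complex.I) • A.map Complex.ofReal } := by
  ext T
  constructor
  · exact exists_exp_smul_map_ofReal_of_conjTranspose_mul_J_mul_self
  · rintro ⟨φ, A, hA, rfl⟩
    rw [Set.mem_ofPred_eq, conjTranspose_smul_map_ofReal_mul_J_mul,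
      Complex.star_exp_ofReal_mul_I_mul_self, hA]
    simp

end
end

section
/- Let M ∈ Mat(c×d, ℂ) with M* M < 1_d (strict matrix inequality, i.e. 1_d - M* M positive definite) and let T = [[A,B],[C,D]] ∈ U(c,d). Then the matrix C M + D is invertible, and the Möbius image T·M := (A M + B)(C M + D)^{-1} again satisfies (T·M)*(T·M) < 1_d. -/
open Matrix MeasureTheory Filter
open scoped ComplexOrder
noncomputable section

/-!
Write `X = AM + B`, `Y = CM + D` and `N = [M; 1]`, so that `TN = [X; Y]`. Since `T` preserves
the form `G = diag(1, -1)`, `YᴴY - XᴴX = -(TN)ᴴ G (TN) = -Nᴴ G N = 1 - MᴴM`, which is positive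
definite.
Hence `YᴴY` is positive definite, so `Y` is invertible, and
`1 - (XY⁻¹)ᴴ(XY⁻¹) = (Y⁻¹)ᴴ (YᴴY - XᴴX) Y⁻¹` is a congruence of a positive definite matrix.
-/

namespace Matrix

variable {R : Type*} [Ring R] [StarRing R] {m n k : Type*} [Fintype m] [Fintype n]

theorem conjTranspose_fromRows_mul_fromBlocks_one_neg_one_mul_fromRows [DecidableEq m]
    [DecidableEq n] (P : Matrix m k R) (Q : Matrix n k R) :
    (fromRows P Q)ᴴ * (fromBlocks 1 0 0 (-1) : Matrix (m ⊕ n) (m ⊕ n) R) * fromRows P Q =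
      Pᴴ * P - Qᴴ * Q := by
  rw [Matrix.mul_assoc, fromBlocks_mul_fromRows, conjTranspose_fromRows_eq_fromCols_conjTranspose,
    fromCols_mul_fromRows]
  simp [sub_eq_add_neg]

end Matrix

theorem conjTranspose_mul_self_sub_of_mem_pseudoU {c d : ℕ} {k : Type*}
    {A : Matrix (Fin c) (Fin c) ℂ} {B : Matrix (Fin c) (Fin d) ℂ}
    {C : Matrix (Fin d) (Fin c) ℂ} {D : Matrix (Fin d) (Fin d) ℂ}
    (hT : fromBlocks A B C D ∈ pseudoU c d) (P : Matrix (Fin c) k ℂ) (Q : Matrix (Fin d) k ℂ) :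
    (A * P + B * Q)ᴴ * (A * P + B * Q) - (C * P + D * Q)ᴴ * (C * P + D * Q) =
      Pᴴ * P - Qᴴ * Q := by
  set T := fromBlocks A B C D
  calc _ = (T * fromRows P Q)ᴴ * Gcd c d * (T * fromRows P Q) := by
        rw [fromBlocks_mul_fromRows, Gcd,
          conjTranspose_fromRows_mul_fromBlocks_one_neg_one_mul_fromRows]
    _ = (fromRows P Q)ᴴ * (Tᴴ * Gcd c d * T) * fromRows P Q := by
        simp only [conjTranspose_mul, Matrix.mul_assoc]
    _ = Pᴴ * P - Qᴴ * Q := by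
        rw [hT, Gcd, conjTranspose_fromRows_mul_fromBlocks_one_neg_one_mul_fromRows]

namespace Matrix

variable {𝕜 : Type*} [RCLike 𝕜] {m n : Type*} [Fintype m] [Fintype n] [DecidableEq n]

theorem isUnit_of_posDef_conjTranspose_mul_self_sub {X : Matrix m n 𝕜} {Y : Matrix n n 𝕜}
    (h : (Yᴴ * Y - Xᴴ * X).PosDef) : IsUnit Y := by
  have hYY : (Yᴴ * Y).PosDef := by
    simpa using h.add_posSemidef (posSemidef_conjTranspose_mul_self X)
  have hdet := (isUnit_iff_isUnit_det _).mp hYY.isUnit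
  rw [det_mul] at hdet
  exact (isUnit_iff_isUnit_det Y).mpr (isUnit_of_mul_isUnit_right hdet)

theorem one_sub_conjTranspose_mul_self_mul_inv {X : Matrix m n 𝕜} {Y : Matrix n n 𝕜}
    (hY : IsUnit Y) :
    1 - (X * Y⁻¹)ᴴ * (X * Y⁻¹) = (Y⁻¹)ᴴ * (Yᴴ * Y - Xᴴ * X) * Y⁻¹ := by
  have hYinv : Y * Y⁻¹ = 1 := mul_nonsing_inv Y ((isUnit_iff_isUnit_det Y).mp hY)
  calc 1 - (X * Y⁻¹)ᴴ * (X * Y⁻¹) = (Y * Y⁻¹)ᴴ * (Y * Y⁻¹) - (X * Y⁻¹)ᴴ * (X * Y⁻¹) := by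
        simp [hYinv]
    _ = _ := by
        simp only [conjTranspose_mul, Matrix.mul_sub, Matrix.sub_mul, Matrix.mul_assoc]

theorem posDef_one_sub_conjTranspose_mul_self_mul_inv {X : Matrix m n 𝕜} {Y : Matrix n n 𝕜}
    (h : (Yᴴ * Y - Xᴴ * X).PosDef) : (1 - (X * Y⁻¹)ᴴ * (X * Y⁻¹)).PosDef := by
  have hY := isUnit_of_posDef_conjTranspose_mul_self_sub h
  rw [one_sub_conjTranspose_mul_self_mul_inv hY]
  exact (IsUnit.posDef_star_left_conjugate_iff (isUnit_nonsing_inv_iff.mpr hY)).mpr h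

end Matrix

/-- `U(c,d)` acts on the Cartan domain `R_I(c,d) = {M : Mᴴ M < 1}` by Möbius
transformations: `CM + D` is invertible and `(T·M)ᴴ (T·M) < 1`. -/
theorem stmt12 (c d : ℕ) (A : Matrix (Fin c) (Fin c) ℂ) (B : Matrix (Fin c) (Fin d) ℂ)
    (C : Matrix (Fin d) (Fin c) ℂ) (D : Matrix (Fin d) (Fin d) ℂ)
    (hT : Matrix.fromBlocks A B C D ∈ pseudoU c d)
    (M : Matrix (Fin c) (Fin d) ℂ) (hM : (1 - Mᴴ * M).PosDef) :
    IsUnit (C * M + D) ∧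
    (1 - ((A * M + B) * (C * M + D)⁻¹)ᴴ * ((A * M + B) * (C * M + D)⁻¹)).PosDef := by
  have hform : (C * M + D)ᴴ * (C * M + D) - (A * M + B)ᴴ * (A * M + B) = 1 - Mᴴ * M := by
    simpa using congrArg Neg.neg (conjTranspose_mul_self_sub_of_mem_pseudoU hT M 1)
  rw [← hform] at hM
  exact ⟨isUnit_of_posDef_conjTranspose_mul_self_sub hM,
    posDef_one_sub_conjTranspose_mul_self_mul_inv hM⟩

end
end

section
/- Let T_1,...,T_n ∈ U(c,d) with lower-right d×d blocks D_1,...,D_n, and let B(0) = diag(0_c, 1_d). Then the product D := B(0) T_1 B(0) T_2 ⋯ B(0) T_n is conjugate (via Q = [[1_c, 0],[D_n^{-1} C_n, 1_d]]) to the block matrix [[0, 0],[0, D_1 D_2 ⋯ D_n]]; in particular the spectral radius of Λ^d D equals |det(D_1 ⋯ D_n)| = Π_{j=1}^n |det D_j|. -/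
open Matrix MeasureTheory Filter
open scoped ComplexOrder
noncomputable section

/-!
Since `B(0) T_j = [[0, 0], [C_j, D_j]]`, the product is again of the form `[[0, 0], [Y, D₁⋯D_n]]`
with `Y = D₁⋯D_{n-1} C_n`, and conjugating by `Q` clears `Y = (D₁⋯D_n)(D_n⁻¹ C_n)` as soon as `D_n`
is invertible; this holds because `T_n ∈ U(c,d)` forces `D_nᴴ D_n = 1 + B_nᴴ B_n`. The
characteristic polynomial of `[[0, 0], [Y, P]]` is `t^c χ_P(t)`, so its `d` largest eigenvalue
moduli are those of `P`, whose product is `|det P|`.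
-/

namespace Matrix

section BlockLowerTriangular

variable {R : Type*} {m o : Type*} [Fintype m] [Fintype o]

lemma fromBlocks_zero_zero_zero_one_mul [Semiring R] [DecidableEq o] (A : Matrix m m R)
    (B : Matrix m o R) (C : Matrix o m R) (D : Matrix o o R) :
    fromBlocks 0 0 0 1 * fromBlocks A B C D = fromBlocks 0 0 C D := by
  simp [fromBlocks_multiply]

lemma fromBlocks_zero_zero_mul_fromBlocks_zero_zero [Semiring R] (C C' : Matrix o m R)
    (D D' : Matrix o o R) :
    fromBlocks (0 : Matrix m m R) 0 C D * fromBlocks 0 0 C' D' =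
      fromBlocks 0 0 (D * C') (D * D') := by
  simp [fromBlocks_multiply]

lemma prod_ofFn_fromBlocks_zero_zero [Semiring R] [DecidableEq m] [DecidableEq o] (n : ℕ)
    (C : Fin (n + 1) → Matrix o m R) (D : Fin (n + 1) → Matrix o o R) :
    (List.ofFn fun j => fromBlocks (0 : Matrix m m R) 0 (C j) (D j)).prod =
      fromBlocks 0 0 ((List.ofFn fun j : Fin n => D j.castSucc).prod * C (Fin.last n))
        (List.ofFn D).prod := by
  induction n with
  | zero => simp
  | succ n ih =>
    rw [List.ofFn_succ', List.prod_concat, ih, fromBlocks_zero_zero_mul_fromBlocks_zero_zero,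
      List.ofFn_succ' D, List.prod_concat]

lemma fromBlocks_zero_zero_eq_conj [CommRing R] [DecidableEq m] [DecidableEq o]
    (P : Matrix o o R) (C : Matrix o m R) (D : Matrix o o R) (hD : IsUnit D.det) :
    (fromBlocks 0 0 (P * C) (P * D) : Matrix (m ⊕ o) (m ⊕ o) R) =
      (fromBlocks 1 0 (D⁻¹ * C) 1)⁻¹ * fromBlocks 0 0 0 (P * D) * fromBlocks 1 0 (D⁻¹ * C) 1 := by
  rw [inv_fromBlocks_zero₁₂_of_isUnit_iff _ _ _ (by simp)]
  simp [fromBlocks_multiply, Matrix.mul_assoc, mul_nonsing_inv_cancel_left _ _ hD]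

end BlockLowerTriangular

end Matrix

lemma Multiset.prod_take_card_sort_replicate_zero_add (s : Multiset ℝ) (hs : ∀ x ∈ s, 0 ≤ x)
    (c : ℕ) : (((Multiset.replicate c 0 + s).sort (· ≥ ·)).take (Multiset.card s)).prod = s.prod := by
  have hsort : (Multiset.replicate c 0 + s).sort (· ≥ ·) = s.sort (· ≥ ·) ++ List.replicate c 0 := by
    refine List.Perm.eq_of_pairwise' (Multiset.pairwise_sort _ _) ?_ ?_
    · refine List.pairwise_append.mpr ⟨Multiset.pairwise_sort _ _,
        List.pairwise_replicate.mpr (Or.inr le_rfl), fun a ha b hb => ?_⟩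
      rw [List.eq_of_mem_replicate hb]
      exact hs a (by simpa using ha)
    · rw [← Multiset.coe_eq_coe, Multiset.sort_eq, ← Multiset.coe_add, Multiset.sort_eq,
        ← Multiset.coe_replicate, add_comm]
  rw [hsort, ← Multiset.length_sort (· ≥ ·), List.take_left, ← Multiset.prod_coe, Multiset.sort_eq]

lemma rhoLam_fromBlocks_zero_zero {m o : Type*} [Fintype m] [Fintype o] [DecidableEq m]
    [DecidableEq o] (C : Matrix o m ℂ) (P : Matrix o o ℂ) :
    rhoLam (Fintype.card o) (Matrix.fromBlocks 0 0 C P) = ‖P.det‖ := by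
  have hroots : (Matrix.fromBlocks 0 0 C P).charpoly.roots.map (‖·‖) =
      Multiset.replicate (Fintype.card m) 0 + P.charpoly.roots.map (‖·‖) := by
    rw [Matrix.charpoly_fromBlocks_zero₁₂, Matrix.charpoly_zero,
      Polynomial.roots_mul
        (mul_ne_zero (pow_ne_zero _ Polynomial.X_ne_zero) P.charpoly_monic.ne_zero),
      Polynomial.roots_X_pow, Multiset.map_add, Multiset.map_nsmul, Multiset.map_singleton,
      Multiset.nsmul_singleton, norm_zero]
  have hcard : Multiset.card (P.charpoly.roots.map (‖·‖)) = Fintype.card o := by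
    rw [Multiset.card_map, ← (IsAlgClosed.splits _).natDegree_eq_card_roots,
      Matrix.charpoly_natDegree_eq_dim]
  have hnonneg : ∀ x ∈ P.charpoly.roots.map (‖·‖), 0 ≤ x := by
    intro x hx
    obtain ⟨z, -, rfl⟩ := Multiset.mem_map.mp hx
    exact norm_nonneg z
  rw [rhoLam, hroots, ← hcard, Multiset.prod_take_card_sort_replicate_zero_add _ hnonneg,
    Matrix.det_eq_prod_roots_charpoly]
  exact (map_multiset_prod (normHom : ℂ →*₀ ℝ) _).symm

lemma isUnit_det_of_fromBlocks_mem_pseudoU {c d : ℕ} {A : Matrix (Fin c) (Fin c) ℂ}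
    {B : Matrix (Fin c) (Fin d) ℂ} {C : Matrix (Fin d) (Fin c) ℂ} {D : Matrix (Fin d) (Fin d) ℂ}
    (h : Matrix.fromBlocks A B C D ∈ pseudoU c d) : IsUnit D.det := by
  have hDD : Dᴴ * D = 1 + Bᴴ * B := by
    have h₂₂ := congrArg Matrix.toBlocks₂₂ h
    simp only [Gcd, Matrix.fromBlocks_conjTranspose, Matrix.fromBlocks_multiply,
      Matrix.toBlocks_fromBlocks₂₂] at h₂₂
    have h₂₂' : Bᴴ * B = -1 + Dᴴ * D :=
      eq_add_of_sub_eq (by simpa [Matrix.mul_neg, sub_eq_add_neg] using h₂₂)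
    rw [h₂₂']
    abel
  have hpd : (Dᴴ * D).PosDef :=
    hDD ▸ Matrix.PosDef.one.add_posSemidef (Matrix.posSemidef_conjTranspose_mul_self B)
  have hu := (Matrix.isUnit_iff_isUnit_det _).mp hpd.isUnit
  rw [Matrix.det_mul] at hu
  exact isUnit_of_mul_isUnit_right hu

/-- For `T₁, …, T_n ∈ U(c,d)` with lower-right blocks `D_j` and `B(0) = diag(0_c, 1_d)`,
the product `D = B(0)T₁ ⋯ B(0)T_n` is conjugate via `Q = [[1_c, 0],[D_n⁻¹ C_n, 1_d]]`
to `[[0,0],[0, D₁⋯D_n]]`; in particular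
`ρ(Λ^d D) = |det(D₁⋯D_n)| = Π_j |det D_j|`. -/
theorem stmt14 (c d n : ℕ)
    (T : Fin (n + 1) → Matrix (Fin c ⊕ Fin d) (Fin c ⊕ Fin d) ℂ)
    (A : Fin (n + 1) → Matrix (Fin c) (Fin c) ℂ) (B : Fin (n + 1) → Matrix (Fin c) (Fin d) ℂ)
    (C : Fin (n + 1) → Matrix (Fin d) (Fin c) ℂ) (D : Fin (n + 1) → Matrix (Fin d) (Fin d) ℂ)
    (hT : ∀ j, T j ∈ pseudoU c d)
    (hblk : ∀ j, T j = Matrix.fromBlocks (A j) (B j) (C j) (D j)) :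
    (List.ofFn fun j => (Matrix.fromBlocks 0 0 0 1 : Matrix (Fin c ⊕ Fin d) (Fin c ⊕ Fin d) ℂ) * T j).prod =
        (Matrix.fromBlocks 1 0 ((D (Fin.last n))⁻¹ * C (Fin.last n)) 1)⁻¹ *
          Matrix.fromBlocks 0 0 0 (List.ofFn fun j => D j).prod *
          Matrix.fromBlocks 1 0 ((D (Fin.last n))⁻¹ * C (Fin.last n)) 1 ∧
    rhoLam d (List.ofFn fun j => (Matrix.fromBlocks 0 0 0 1 : Matrix (Fin c ⊕ Fin d) (Fin c ⊕ Fin d) ℂ) * T j).prod =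
        ‖(List.ofFn fun j => D j).prod.det‖ ∧
    ‖(List.ofFn fun j => D j).prod.det‖ = ∏ j, ‖(D j).det‖ := by
  have hprod : (List.ofFn fun j =>
      (Matrix.fromBlocks 0 0 0 1 : Matrix (Fin c ⊕ Fin d) (Fin c ⊕ Fin d) ℂ) * T j).prod =
      Matrix.fromBlocks 0 0 ((List.ofFn fun j : Fin n => D j.castSucc).prod * C (Fin.last n))
        (List.ofFn D).prod := by
    simp only [hblk, Matrix.fromBlocks_zero_zero_zero_one_mul]
    exact Matrix.prod_ofFn_fromBlocks_zero_zero n C D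
  have hsplit : (List.ofFn D).prod =
      (List.ofFn fun j : Fin n => D j.castSucc).prod * D (Fin.last n) := by
    rw [List.ofFn_succ', List.prod_concat]
  have hD : IsUnit (D (Fin.last n)).det :=
    isUnit_det_of_fromBlocks_mem_pseudoU (hblk _ ▸ hT _)
  refine ⟨?_, ?_, ?_⟩
  · rw [hprod, hsplit]
    exact Matrix.fromBlocks_zero_zero_eq_conj _ _ _ hD
  · have h := rhoLam_fromBlocks_zero_zero
      ((List.ofFn fun j : Fin n => D j.castSucc).prod * C (Fin.last n)) (List.ofFn D).prod
    rwa [Fintype.card_fin, ← hprod] at h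
  · rw [← Matrix.coe_detMonoidHom, map_list_prod, List.map_ofFn, List.prod_ofFn, norm_prod]
    rfl

end
end
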